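/- Let A₁, …, A_m be nonnegative n×n real matrices and P_j = A_j ⋯ A_m A₁ ⋯ A_{j-1}. Then ρ(A₁^{(1/m)} ∘ ⋯ ∘ A_m^{(1/m)}) ≤ ρ(P₁^{(1/m)} ∘ ⋯ ∘ P_m^{(1/m)})^{1/m} ≤ ρ(A₁A₂⋯A_m)^{1/m}. -/

import Mathlib

open Matrix

/-- Spectral radius of a real matrix: max modulus of its (complex) eigenvalues. -/
noncomputable def specRad {N : Type*} [Fintype N] [DecidableEq N] (A : Matrix N N ℝ) : ℝ :=
  (spectralRadius ℂ (A.map Complex.ofReal)).toReal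

/-- Operator norm induced by the Euclidean (ℓ²) norm. -/
noncomputable def l2OpNorm {N : Type*} [Fintype N] [DecidableEq N] (A : Matrix N N ℝ) : ℝ :=
  ‖Matrix.toEuclideanCLM (𝕜 := ℝ) A‖

/-- Entrywise α-th power (with the convention 0^0 = 1, as for `Real.rpow`). -/
noncomputable def hadPow {N : Type*} (A : Matrix N N ℝ) (α : ℝ) : Matrix N N ℝ :=
  fun i j => A i j ^ α

/-- Hadamard weighted geometric mean `A₁^{(α₁)} ∘ ⋯ ∘ A_m^{(α_m)}`. -/
noncomputable def hadGeo {m : ℕ} {N : Type*} (A : Fin m → Matrix N N ℝ) (α : Fin m → ℝ) :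
    Matrix N N ℝ :=
  fun i j => ∏ k, (A k i j) ^ (α k)

/-- `P_j = A_j A_{j+1} ⋯ A_m A₁ ⋯ A_{j-1}`, the cyclic product starting at `j`. -/
noncomputable def cycProd {m : ℕ} {N : Type*} [Fintype N] [DecidableEq N]
    (A : Fin m → Matrix N N ℝ) (j : Fin m) : Matrix N N ℝ :=
  (List.ofFn fun k => A (j + k)).prod

/-!
Write `B = A₁^(1/m) ∘ ⋯ ∘ A_m^(1/m)` and `C = P₁^(1/m) ∘ ⋯ ∘ P_m^(1/m)`. Hölder's inequality
gives, entrywise, `(X₁^(1/m) ∘ ⋯ ∘ X_m^(1/m)) (Y₁^(1/m) ∘ ⋯ ∘ Y_m^(1/m)) ≤ (X₁Y₁)^(1/m) ∘ ⋯ ∘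
(X_mY_m)^(1/m)` for nonnegative matrices. Applied to the `m` cyclic shifts of the family `A`, each
of which has Hadamard mean `B`, it gives `B^m ≤ C`; applied to `s` copies of `P` it gives
`C^s ≤ (P₁^s)^(1/m) ∘ ⋯ ∘ (P_m^s)^(1/m)`. Hölder on row sums bounds the ℓ^∞ operator norm of such
a Hadamard mean by the geometric mean of the norms, so Gelfand's formula turns the entrywise bounds
into `ρ(B)^m ≤ ρ(C)` and `ρ(C) ≤ ∏ ρ(P_l)^(1/m)`. Finally every `P_l` has the spectral radius of
`A₁⋯A_m`, because `ρ(XY) = ρ(YX)`.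
-/

open Filter Topology
open scoped Matrix.Norms.Operator

theorem Real.sum_prod_rpow_le_prod_sum_rpow {ι κ : Type*} [Fintype ι] (s : Finset κ)
    {w : ι → ℝ} (hw : ∀ l, 0 < w l) (hw1 : ∑ l, w l = 1) {f : ι → κ → ℝ}
    (hf : ∀ l k, 0 ≤ f l k) :
    ∑ k ∈ s, ∏ l, f l k ^ w l ≤ ∏ l, (∑ k ∈ s, f l k) ^ w l := by
  set S : ι → ℝ := fun l => ∑ k ∈ s, f l k
  have hS : ∀ l, 0 ≤ S l := fun l => Finset.sum_nonneg fun k _ => hf l k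
  by_cases hzero : ∃ l₀, S l₀ = 0
  · obtain ⟨l₀, hl₀⟩ := hzero
    have hf₀ : ∀ k ∈ s, f l₀ k = 0 :=
      (Finset.sum_eq_zero_iff_of_nonneg fun k _ => hf l₀ k).1 hl₀
    calc ∑ k ∈ s, ∏ l, f l k ^ w l = 0 :=
          Finset.sum_eq_zero fun k hk => Finset.prod_eq_zero (Finset.mem_univ l₀)
            (by rw [hf₀ k hk, Real.zero_rpow (hw l₀).ne'])
      _ ≤ _ := Finset.prod_nonneg fun l _ => Real.rpow_nonneg (hS l) _
  push Not at hzero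
  have hSpos : ∀ l, 0 < S l := fun l => (hS l).lt_of_ne' (hzero l)
  -- weighted AM-GM for the normalized values `f l k / S l`, summed over `k`
  have hnormalized : ∑ k ∈ s, ∏ l, (f l k / S l) ^ w l ≤ 1 := calc
    ∑ k ∈ s, ∏ l, (f l k / S l) ^ w l ≤ ∑ k ∈ s, ∑ l, w l * (f l k / S l) :=
        Finset.sum_le_sum fun k _ => Real.geom_mean_le_arith_mean_weighted _ _ _
          (fun l _ => (hw l).le) hw1 fun l _ => div_nonneg (hf l k) (hS l)
    _ = ∑ l, w l * (S l / S l) := by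
        rw [Finset.sum_comm]
        simp only [← Finset.mul_sum, ← Finset.sum_div, S]
    _ = 1 := by simp [div_self (hSpos _).ne', hw1]
  have hprod_pos : 0 < ∏ l, S l ^ w l :=
    Finset.prod_pos fun l _ => Real.rpow_pos_of_pos (hSpos l) _
  rw [← div_le_one hprod_pos, Finset.sum_div]
  refine (Finset.sum_congr rfl fun k _ => ?_).trans_le hnormalized
  rw [← Finset.prod_div_distrib]
  exact Finset.prod_congr rfl fun l _ => (Real.div_rpow (hf l k) (hS l) _).symm

namespace Matrix

variable {N R : Type*} [Fintype N] [Semiring R] [PartialOrder R] [IsOrderedRing R]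

theorem mul_apply_nonneg {X Y : Matrix N N R} (hX : ∀ i j, 0 ≤ X i j)
    (hY : ∀ i j, 0 ≤ Y i j) (i j : N) : 0 ≤ (X * Y) i j :=
  Finset.sum_nonneg fun k _ => mul_nonneg (hX i k) (hY k j)

theorem list_prod_apply_nonneg [DecidableEq N] {L : List (Matrix N N R)}
    (hL : ∀ X ∈ L, ∀ i j, 0 ≤ X i j) : ∀ i j, 0 ≤ L.prod i j := by
  induction L with
  | nil => exact fun i j => by by_cases h : i = j <;> simp [h]
  | cons X L ih =>
    rw [List.prod_cons]
    exact mul_apply_nonneg (hL X List.mem_cons_self)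
      (ih fun Y hY => hL Y (List.mem_cons_of_mem X hY))

theorem mul_apply_le_mul_apply {X X' Y Y' : Matrix N N R} (hX : ∀ i j, 0 ≤ X i j)
    (hY : ∀ i j, 0 ≤ Y i j) (hXX' : ∀ i j, X i j ≤ X' i j) (hYY' : ∀ i j, Y i j ≤ Y' i j)
    (i j : N) : (X * Y) i j ≤ (X' * Y') i j :=
  Finset.sum_le_sum fun k _ =>
    mul_le_mul (hXX' i k) (hYY' k j) (hY k j) ((hX i k).trans (hXX' i k))

theorem pow_apply_le_pow_apply [DecidableEq N] {X Y : Matrix N N R} (hX : ∀ i j, 0 ≤ X i j)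
    (hXY : ∀ i j, X i j ≤ Y i j) (s : ℕ) : ∀ i j, (X ^ s) i j ≤ (Y ^ s) i j := by
  induction s with
  | zero => exact fun i j => le_rfl
  | succ s ih =>
    simp only [pow_succ]
    exact mul_apply_le_mul_apply (pow_apply_nonneg hX s) hX ih hXY

end Matrix

section HadamardGeometricMean

variable {m : ℕ} {N : Type*}

theorem hadGeo_nonneg {V : Fin m → Matrix N N ℝ} (hV : ∀ l i j, 0 ≤ V l i j) (w : Fin m → ℝ) :
    ∀ i j, 0 ≤ hadGeo V w i j := fun i j =>
  Finset.prod_nonneg fun l _ => Real.rpow_nonneg (hV l i j) _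

theorem hadGeo_comp_equiv (V : Fin m → Matrix N N ℝ) (w : Fin m → ℝ) (e : Fin m ≃ Fin m) :
    hadGeo (V ∘ e) (w ∘ e) = hadGeo V w := by
  ext i j
  exact e.prod_comp fun l => V l i j ^ w l

variable [Fintype N] {w : Fin m → ℝ}

theorem hadGeo_mul_hadGeo_apply_le (hw : ∀ l, 0 < w l) (hw1 : ∑ l, w l = 1)
    {X Y : Fin m → Matrix N N ℝ} (hX : ∀ l i j, 0 ≤ X l i j) (hY : ∀ l i j, 0 ≤ Y l i j)
    (i j : N) : (hadGeo X w * hadGeo Y w) i j ≤ hadGeo (fun l => X l * Y l) w i j := by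
  have hentry : ∀ k, hadGeo X w i k * hadGeo Y w k j = ∏ l, (X l i k * Y l k j) ^ w l :=
    fun k => by
      simp only [hadGeo, ← Finset.prod_mul_distrib]
      exact Finset.prod_congr rfl fun l _ => (Real.mul_rpow (hX l i k) (hY l k j)).symm
  simp only [mul_apply, hentry]
  exact Real.sum_prod_rpow_le_prod_sum_rpow _ hw hw1 fun l k => mul_nonneg (hX l i k) (hY l k j)

variable [DecidableEq N]

theorem list_prod_map_hadGeo_apply_le (hw : ∀ l, 0 < w l) (hw1 : ∑ l, w l = 1)
    {L : List (Fin m → Matrix N N ℝ)} (hL : ∀ V ∈ L, ∀ l i j, 0 ≤ V l i j) :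
    ∀ i j, (L.map (hadGeo · w)).prod i j ≤ hadGeo (fun l => (L.map (· l)).prod) w i j := by
  induction L with
  | nil =>
    intro i j
    by_cases h : i = j
    · simp [h, hadGeo]
    · simp only [List.map_nil, List.prod_nil, one_apply_ne h]
      exact hadGeo_nonneg (fun _ => list_prod_apply_nonneg (L := []) nofun) w i j
  | cons V L ih =>
    have hV := hL V List.mem_cons_self
    have hL' : ∀ U ∈ L, ∀ l i j, 0 ≤ U l i j := fun U hU => hL U (List.mem_cons_of_mem V hU)
    have hmeans : ∀ i j, 0 ≤ (L.map (hadGeo · w)).prod i j :=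
      list_prod_apply_nonneg (List.forall_mem_map.2 fun U hU => hadGeo_nonneg (hL' U hU) w)
    have hprods : ∀ l i j, 0 ≤ (L.map (· l)).prod i j := fun l =>
      list_prod_apply_nonneg (List.forall_mem_map.2 fun U hU => hL' U hU l)
    intro i j
    simp only [List.map_cons, List.prod_cons]
    exact le_trans
      (mul_apply_le_mul_apply (hadGeo_nonneg hV w) hmeans (fun _ _ => le_rfl) (ih hL') i j)
      (hadGeo_mul_hadGeo_apply_le hw hw1 hV hprods i j)

theorem hadGeo_pow_apply_le (hw : ∀ l, 0 < w l) (hw1 : ∑ l, w l = 1)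
    {P : Fin m → Matrix N N ℝ} (hP : ∀ l i j, 0 ≤ P l i j) (s : ℕ) :
    ∀ i j, (hadGeo P w ^ s) i j ≤ hadGeo (fun l => P l ^ s) w i j := by
  simpa [List.map_replicate] using
    list_prod_map_hadGeo_apply_le hw hw1 (L := List.replicate s P)
      fun V hV => List.eq_of_mem_replicate hV ▸ hP

theorem cycProd_apply_nonneg {A : Fin m → Matrix N N ℝ} (hA : ∀ k i j, 0 ≤ A k i j)
    (j : Fin m) : ∀ a b, 0 ≤ cycProd A j a b :=
  list_prod_apply_nonneg (List.forall_mem_ofFn_iff.2 fun _ => hA _)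

theorem hadGeo_pow_apply_le_hadGeo_cycProd (hm : 0 < m) {A : Fin m → Matrix N N ℝ}
    (hA : ∀ k i j, 0 ≤ A k i j) :
    ∀ i j, (hadGeo A (fun _ => (1 : ℝ) / m) ^ m) i j
      ≤ hadGeo (cycProd A) (fun _ => (1 : ℝ) / m) i j := by
  have : NeZero m := ⟨hm.ne'⟩
  set w : Fin m → ℝ := fun _ => (1 : ℝ) / m
  have hw : ∀ l, 0 < w l := fun _ => by positivity
  have hw1 : ∑ l, w l = 1 := by simp [w, hm.ne']
  have hshift : ∀ k, hadGeo (fun l => A (l + k)) w = hadGeo A w := fun k =>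
    hadGeo_comp_equiv A w (Equiv.addRight k)
  have h := list_prod_map_hadGeo_apply_le hw hw1
    (L := List.ofFn fun k : Fin m => fun l => A (l + k)) (by simpa using fun k l => hA (l + k))
  rw [show cycProd A = fun l => (List.ofFn fun k => A (l + k)).prod from rfl]
  simpa [List.map_ofFn, Function.comp_def, hshift] using h

end HadamardGeometricMean

namespace Matrix

theorem linfty_opNorm_le_iff {m n α : Type*} [Fintype m] [Fintype n] [SeminormedAddCommGroup α]
    {A : Matrix m n α} {c : ℝ} (hc : 0 ≤ c) : ‖A‖ ≤ c ↔ ∀ i, ∑ j, ‖A i j‖ ≤ c := by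
  lift c to NNReal using hc
  simp only [← coe_nnnorm, ← NNReal.coe_sum, NNReal.coe_le_coe, linfty_opNNNorm_def,
    Finset.sup_le_iff, Finset.mem_univ, true_implies]

theorem sum_norm_apply_le_linfty_opNorm {m n α : Type*} [Fintype m] [Fintype n]
    [SeminormedAddCommGroup α] (A : Matrix m n α) (i : m) : ∑ j, ‖A i j‖ ≤ ‖A‖ :=
  (linfty_opNorm_le_iff (norm_nonneg A)).1 le_rfl i

theorem linfty_opNorm_le_of_nonneg_of_le {m n : Type*} [Fintype m] [Fintype n]
    {A B : Matrix m n ℝ} (hA : ∀ i j, 0 ≤ A i j) (hAB : ∀ i j, A i j ≤ B i j) : ‖A‖ ≤ ‖B‖ :=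
  (linfty_opNorm_le_iff (norm_nonneg B)).2 fun i =>
    calc ∑ j, ‖A i j‖ ≤ ∑ j, ‖B i j‖ := Finset.sum_le_sum fun j _ => by
          rw [Real.norm_of_nonneg (hA i j), Real.norm_of_nonneg ((hA i j).trans (hAB i j))]
          exact hAB i j
      _ ≤ ‖B‖ := sum_norm_apply_le_linfty_opNorm B i

end Matrix

section SpectralRadius

variable {N : Type*} [Fintype N] [DecidableEq N]

theorem norm_hadGeo_le {m : ℕ} {V : Fin m → Matrix N N ℝ} (hV : ∀ l i j, 0 ≤ V l i j)
    {w : Fin m → ℝ} (hw : ∀ l, 0 < w l) (hw1 : ∑ l, w l = 1) :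
    ‖hadGeo V w‖ ≤ ∏ l, ‖V l‖ ^ w l := by
  refine (linfty_opNorm_le_iff (Finset.prod_nonneg fun l _ => by positivity)).2 fun i => ?_
  calc ∑ j, ‖hadGeo V w i j‖ = ∑ j, ∏ l, V l i j ^ w l :=
        Finset.sum_congr rfl fun j _ => Real.norm_of_nonneg (hadGeo_nonneg hV w i j)
    _ ≤ ∏ l, (∑ j, V l i j) ^ w l :=
        Real.sum_prod_rpow_le_prod_sum_rpow _ hw hw1 fun l j => hV l i j
    _ ≤ ∏ l, ‖V l‖ ^ w l := by
        have hrow : ∀ l, 0 ≤ ∑ j, V l i j := fun l => Finset.sum_nonneg fun j _ => hV l i j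
        exact Finset.prod_le_prod (fun l _ => Real.rpow_nonneg (hrow l) _) fun l _ =>
          Real.rpow_le_rpow (hrow l)
            ((Finset.sum_le_sum fun j _ => Real.le_norm_self _).trans
              (sum_norm_apply_le_linfty_opNorm (V l) i)) (hw l).le

omit [DecidableEq N] in
theorem nnnorm_map_ofReal (M : Matrix N N ℝ) : ‖M.map Complex.ofReal‖₊ = ‖M‖₊ := by
  simp [linfty_opNNNorm_def]

theorem spectralRadius_map_ofReal_ne_top (M : Matrix N N ℝ) :
    spectralRadius ℂ (M.map Complex.ofReal) ≠ ⊤ :=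
  ((spectrum.spectralRadius_le_pow_nnnorm_pow_one_div ℂ _ 0).trans_lt
    (ENNReal.mul_lt_top (by simp) (by simp))).ne

theorem tendsto_norm_pow_rpow_specRad (M : Matrix N N ℝ) :
    Tendsto (fun s : ℕ => ‖M ^ s‖ ^ (1 / (s : ℝ))) atTop (𝓝 (specRad M)) := by
  have h := (ENNReal.tendsto_toReal (spectralRadius_map_ofReal_ne_top M)).comp
    (spectrum.pow_nnnorm_pow_one_div_tendsto_nhds_spectralRadius (M.map Complex.ofReal))
  refine h.congr fun s => ?_
  rw [Function.comp_apply, ← ENNReal.toReal_rpow, ENNReal.coe_toReal,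
    show M.map Complex.ofReal ^ s = (M ^ s).map Complex.ofReal from
      (M.map_pow Complex.ofRealHom s).symm, nnnorm_map_ofReal, coe_nnnorm]

theorem specRad_nonneg (M : Matrix N N ℝ) : 0 ≤ specRad M :=
  ENNReal.toReal_nonneg

theorem specRad_le_specRad_of_le {X Y : Matrix N N ℝ} (hX : ∀ i j, 0 ≤ X i j)
    (hXY : ∀ i j, X i j ≤ Y i j) : specRad X ≤ specRad Y :=
  le_of_tendsto_of_tendsto' (tendsto_norm_pow_rpow_specRad X) (tendsto_norm_pow_rpow_specRad Y)
    fun s => Real.rpow_le_rpow (norm_nonneg _) (linfty_opNorm_le_of_nonneg_of_le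
      (pow_apply_nonneg hX s) (pow_apply_le_pow_apply hX hXY s)) (by positivity)

-- Both sides are limits of the subsequence `‖M ^ (k * s)‖ ^ (1 / (k * s))` of Gelfand's formula.
theorem specRad_pow {k : ℕ} (hk : 0 < k) (M : Matrix N N ℝ) : specRad (M ^ k) = specRad M ^ k := by
  have hsub : Tendsto (fun s : ℕ => k * s) atTop atTop :=
    tendsto_atTop_mono (fun s => Nat.le_mul_of_pos_left s hk) tendsto_id
  refine tendsto_nhds_unique (tendsto_norm_pow_rpow_specRad (M ^ k))
    ((((tendsto_norm_pow_rpow_specRad M).comp hsub).pow k).congr fun s => ?_)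
  rw [Function.comp_apply, ← pow_mul, ← Real.rpow_natCast, ← Real.rpow_mul (norm_nonneg _),
    Nat.cast_mul, one_div_mul_eq_div, div_mul_cancel_left₀ (by positivity), one_div]

theorem specRad_hadGeo_le {m : ℕ} {P : Fin m → Matrix N N ℝ} (hP : ∀ l i j, 0 ≤ P l i j)
    {w : Fin m → ℝ} (hw : ∀ l, 0 < w l) (hw1 : ∑ l, w l = 1) :
    specRad (hadGeo P w) ≤ ∏ l, specRad (P l) ^ w l := by
  refine le_of_tendsto_of_tendsto' (tendsto_norm_pow_rpow_specRad _)
    (tendsto_finsetProd _ fun l _ =>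
      (tendsto_norm_pow_rpow_specRad (P l)).rpow_const (Or.inr (hw l).le)) fun s => ?_
  have hnorm : ‖hadGeo P w ^ s‖ ≤ ∏ l, ‖P l ^ s‖ ^ w l :=
    (linfty_opNorm_le_of_nonneg_of_le (pow_apply_nonneg (hadGeo_nonneg hP w) s)
      (hadGeo_pow_apply_le hw hw1 hP s)).trans
      (norm_hadGeo_le (fun l => pow_apply_nonneg (hP l) s) hw hw1)
  calc ‖hadGeo P w ^ s‖ ^ (1 / (s : ℝ)) ≤ (∏ l, ‖P l ^ s‖ ^ w l) ^ (1 / (s : ℝ)) := by gcongr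
    _ = ∏ l, (‖P l ^ s‖ ^ (1 / (s : ℝ))) ^ w l := by
        rw [← Real.finsetProd_rpow _ _ fun l _ => by positivity]
        refine Finset.prod_congr rfl fun l _ => ?_
        rw [← Real.rpow_mul (norm_nonneg _), ← Real.rpow_mul (norm_nonneg _), mul_comm]

end SpectralRadius

theorem spectralRadius_mul_comm {𝕜 A : Type*} [NormedField 𝕜] [Ring A] [Algebra 𝕜 A]
    (a b : A) : spectralRadius 𝕜 (a * b) = spectralRadius 𝕜 (b * a) := by
  -- `0` contributes nothing to the supremum, and away from `0` the two spectra agree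
  have key : ∀ x y : A, spectralRadius 𝕜 (x * y) ≤ spectralRadius 𝕜 (y * x) := fun x y =>
    iSup₂_le fun k hk => by
      rcases eq_or_ne k 0 with rfl | hk0
      · simp
      · have hk' : k ∈ spectrum 𝕜 (y * x) \ {0} :=
          spectrum.nonzero_mul_comm (𝕜 := 𝕜) x y ▸ ⟨hk, hk0⟩
        exact le_iSup₂_of_le (f := fun (k : 𝕜) (_ : k ∈ spectrum 𝕜 (y * x)) => (‖k‖₊ : ENNReal))
          k hk'.1 le_rfl
  exact (key a b).antisymm (key b a)

theorem List.ofFn_add_eq_rotate {α : Type*} {m : ℕ} (f : Fin m → α) (j : Fin m) :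
    List.ofFn (fun k => f (j + k)) = (List.ofFn f).rotate j := by
  refine List.ext_getElem (by simp) fun k _ _ => ?_
  simp only [List.getElem_ofFn, List.getElem_rotate, List.length_ofFn]
  congr 1
  ext
  simp [Fin.val_add, Nat.add_comm]

section CyclicProducts

variable {N : Type*} [Fintype N] [DecidableEq N]

theorem specRad_mul_comm (X Y : Matrix N N ℝ) : specRad (X * Y) = specRad (Y * X) := by
  have hmap : ∀ U V : Matrix N N ℝ,
      (U * V).map Complex.ofReal = U.map Complex.ofReal * V.map Complex.ofReal :=
    fun _ _ => Matrix.map_mul (f := Complex.ofRealHom)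
  rw [specRad, specRad, hmap, hmap, spectralRadius_mul_comm]

theorem specRad_list_prod_rotate (L : List (Matrix N N ℝ)) (n : ℕ) :
    specRad (L.rotate n).prod = specRad L.prod := by
  rw [List.rotate_eq_drop_append_take_mod, List.prod_append, specRad_mul_comm, ← List.prod_append,
    List.take_append_drop]

theorem specRad_cycProd {m : ℕ} (A : Fin m → Matrix N N ℝ) (j : Fin m) :
    specRad (cycProd A j) = specRad (List.ofFn A).prod := by
  rw [cycProd, List.ofFn_add_eq_rotate, specRad_list_prod_rotate]

end CyclicProducts

theorem stmt8 {m : ℕ} (hm : 0 < m) {N : Type*} [Fintype N] [DecidableEq N]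
    (A : Fin m → Matrix N N ℝ) (hA : ∀ k, ∀ i j, 0 ≤ A k i j) :
    specRad (hadGeo A (fun _ => (1 : ℝ) / m)) ≤
        specRad (hadGeo (cycProd A) (fun _ => (1 : ℝ) / m)) ^ ((1 : ℝ) / m) ∧
      specRad (hadGeo (cycProd A) (fun _ => (1 : ℝ) / m)) ^ ((1 : ℝ) / m) ≤
        specRad (List.ofFn A).prod ^ ((1 : ℝ) / m) := by
  set w : Fin m → ℝ := fun _ => (1 : ℝ) / m
  have hw : ∀ l, 0 < w l := fun _ => by positivity
  have hw1 : ∑ l, w l = 1 := by simp [w, hm.ne']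
  have hP : ∀ l i j, 0 ≤ cycProd A l i j := cycProd_apply_nonneg hA
  constructor
  · have hpow : specRad (hadGeo A w) ^ m ≤ specRad (hadGeo (cycProd A) w) := by
      rw [← specRad_pow hm]
      exact specRad_le_specRad_of_le (pow_apply_nonneg (hadGeo_nonneg hA w) m)
        (hadGeo_pow_apply_le_hadGeo_cycProd hm hA)
    calc specRad (hadGeo A w)
        = (specRad (hadGeo A w) ^ m) ^ ((1 : ℝ) / m) := by
          rw [one_div, Real.pow_rpow_inv_natCast (specRad_nonneg _) hm.ne']
      _ ≤ specRad (hadGeo (cycProd A) w) ^ ((1 : ℝ) / m) := by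
          gcongr
          exact pow_nonneg (specRad_nonneg _) m
  · refine Real.rpow_le_rpow (specRad_nonneg _) ((specRad_hadGeo_le hP hw hw1).trans_eq ?_)
      (by positivity)
    simp only [w, specRad_cycProd, Finset.prod_const, Finset.card_univ, Fintype.card_fin]
    rw [← Real.rpow_mul_natCast (specRad_nonneg _), one_div_mul_cancel (by positivity),
      Real.rpow_one]
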